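/- Let M be a bounded metric space. Then the MST dimension of M equals the upper box dimension of M; that is, inf{ α > 0 : there exists C > 0 such that every minimal spanning tree T over any finite family of points of M satisfies E_α(T) ≤ C } equals limsup_{ε→0} log N(ε) / log(1/ε), where N(ε) is the maximal cardinality of a finite subset of M whose points have pairwise distances ≥ 2ε (the maximal number of pairwise disjoint balls of radius ε in M). -/

import Mathlib

/-- The `α`-energy of a graph `T` on vertex set `Fin n`, with vertex `i` placed at
`v i` in the metric space `X`: the sum over the edges `{i,j}` of `T` of
`dist (v i) (v j) ^ α`. -/
noncomputable def energy {X : Type*} [MetricSpace X] {n : ℕ} (v : Fin n → X)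
    (T : SimpleGraph (Fin n)) (α : ℝ) : ℝ :=
  ∑ e ∈ T.edgeSet.toFinite.toFinset,
    Sym2.lift ⟨fun i j => dist (v i) (v j) ^ α, fun i j => by simp only [dist_comm]⟩ e

/-- `T` is a minimal spanning tree over the points `v 0, …, v (n-1)`: it is a tree on
the vertex set `Fin n` minimizing the total edge length `E₁` among all such trees. -/
def IsMST {X : Type*} [MetricSpace X] {n : ℕ} (v : Fin n → X)
    (T : SimpleGraph (Fin n)) : Prop :=
  T.IsTree ∧ ∀ T' : SimpleGraph (Fin n), T'.IsTree → energy v T 1 ≤ energy v T' 1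

open scoped ENNReal Classical

/-- The MST dimension of a metric space `M`, as a value in `[0, ∞]`: the infimum of the
set of exponents `α > 0` for which there is a constant `C` bounding the `α`-energy of
every minimal spanning tree over any finite family of points of `M`. -/
noncomputable def dimMST (M : Type*) [MetricSpace M] : ℝ≥0∞ :=
  sInf {x : ℝ≥0∞ | ∃ α : ℝ, 0 < α ∧ x = ENNReal.ofReal α ∧ ∃ C : ℝ,
    ∀ n : ℕ, ∀ v : Fin n → M, ∀ T : SimpleGraph (Fin n), IsMST v T → energy v T α ≤ C}

/-- The packing number `N(ε)` of a metric space `M`, as a value in `[0, ∞]`: the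
supremum of the cardinalities of finite subsets of `M` whose points are pairwise at
distance `≥ 2ε`, i.e. the maximal number of pairwise disjoint balls of radius `ε`. -/
noncomputable def packingNumber (M : Type*) [MetricSpace M] (ε : ℝ) : ℝ≥0∞ :=
  ⨆ (S : Finset M) (_ : ∀ x ∈ S, ∀ y ∈ S, x ≠ y → 2 * ε ≤ dist x y), (S.card : ℝ≥0∞)

/-- The upper box dimension of a metric space `M`, as a value in `[0, ∞]`:
`limsup_{ε → 0⁺} log N(ε) / log (1/ε)` where `N(ε)` is the packing number; the value is
`∞` at scales where the packing number is infinite. -/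
noncomputable def dimBox (M : Type*) [MetricSpace M] : ℝ≥0∞ :=
  Filter.limsup (fun ε : ℝ =>
      if packingNumber M ε = ⊤ then (⊤ : ℝ≥0∞)
      else ENNReal.ofReal (Real.log (packingNumber M ε).toReal / Real.log (1 / ε)))
    (nhdsWithin (0 : ℝ) (Set.Ioi 0))

/-!
A minimal spanning tree over a `2ε`-separated family of `N` points has `N - 1` edges, all of
length at least `2ε`; so if the `α`-energies of MSTs are bounded by `C`, then
`N(ε) ≤ 1 + C (2ε)^{-α}`, which gives `dimBox ≤ α`.

Conversely, orient an MST away from a root and call the far endpoint of an edge its tip. By the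
cut property (exchanging an edge for a shorter one would give a lighter spanning tree), the tips
of two distinct edges are at distance at least the shorter of the two lengths, so an MST has at
most `N(t/2)` edges of length `≥ t`. If `N(ε) = O(ε^{-β})` with `β < α`, splitting the edges into
dyadic length classes bounds the `α`-energy by a convergent geometric series, so `dimMST ≤ α`.
-/

open Filter Topology Finset

namespace SimpleGraph

variable {V : Type*} {G : SimpleGraph V}

lemma Reachable.deleteEdges_or {x y : V} (h : G.Reachable x y) (a b : V) :
    (G.deleteEdges {s(a, b)}).Reachable x y ∨ (G.deleteEdges {s(a, b)}).Reachable x a ∨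
      (G.deleteEdges {s(a, b)}).Reachable x b := by
  obtain ⟨p⟩ := h
  induction p with
  | nil => exact Or.inl .rfl
  | @cons x z y hxz _ ih =>
    by_cases he : s(x, z) = s(a, b)
    · rcases Sym2.eq_iff.1 he with ⟨rfl, -⟩ | ⟨rfl, -⟩
      · exact Or.inr (Or.inl .rfl)
      · exact Or.inr (Or.inr .rfl)
    · have hxz' : (G.deleteEdges {s(a, b)}).Adj x z := by simp [hxz, he]
      exact ih.imp hxz'.reachable.trans (Or.imp hxz'.reachable.trans hxz'.reachable.trans)

lemma Connected.reachable_deleteEdges_or (hG : G.Connected) (a b x : V) :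
    (G.deleteEdges {s(a, b)}).Reachable x a ∨ (G.deleteEdges {s(a, b)}).Reachable x b := by
  rcases (hG x a).deleteEdges_or a b with h | h | h <;> tauto

lemma IsAcyclic.not_reachable_deleteEdges {a b : V} (hG : G.IsAcyclic) (hab : G.Adj a b) :
    ¬(G.deleteEdges {s(a, b)}).Reachable a b :=
  isBridge_iff.1 (isAcyclic_iff_forall_adj_isBridge.1 hG hab)

lemma IsTree.isTree_deleteEdges_sup_edge {a b x y : V} (hG : G.IsTree) (hab : G.Adj a b)
    (hx : (G.deleteEdges {s(a, b)}).Reachable x a)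
    (hy : (G.deleteEdges {s(a, b)}).Reachable y b) :
    (G.deleteEdges {s(a, b)} ⊔ edge x y).IsTree := by
  have hxy : ¬(G.deleteEdges {s(a, b)}).Reachable x y := fun h =>
    hG.isAcyclic.not_reachable_deleteEdges hab (hx.symm.trans (h.trans hy))
  have hyx : (G.deleteEdges {s(a, b)} ⊔ edge x y).Adj y x := by
    simp only [sup_adj, edge_adj]
    exact Or.inr ⟨by simp, fun h => hxy (h ▸ .rfl)⟩
  refine ⟨(connected_iff_exists_forall_reachable _).2 ⟨x, fun u => ?_⟩,
    (hG.isAcyclic.anti (deleteEdges_le _)).sup_edge_of_not_reachable hxy⟩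
  rcases hG.connected.reachable_deleteEdges_or a b u with h | h
  · exact ((h.trans hx.symm).mono le_sup_left).symm
  · exact (((h.trans hy.symm).mono le_sup_left).trans hyx.reachable).symm

lemma IsTree.exists_eq_mk_not_reachable_deleteEdges (hG : G.IsTree) (r : V) {e : Sym2 V}
    (he : e ∈ G.edgeSet) :
    ∃ a b, e = s(a, b) ∧ G.Adj a b ∧ ¬(G.deleteEdges {s(a, b)}).Reachable a r := by
  induction e with
  | _ x y =>
    rcases hG.connected.reachable_deleteEdges_or x y r with h | h
    · refine ⟨y, x, Sym2.eq_swap, G.adj_symm he, fun hyr => ?_⟩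
      rw [Sym2.eq_swap] at hyr
      exact hG.isAcyclic.not_reachable_deleteEdges he (hyr.trans h).symm
    · exact ⟨x, y, rfl, he, fun hxr => hG.isAcyclic.not_reachable_deleteEdges he (hxr.trans h)⟩

/-- Removing `s(a, b)` cuts off a part containing `a` but not `r`; the parts cut off by two
distinct edges cannot contain each other's tips. -/
lemma Connected.eq_of_reachable_deleteEdges {r a b c d : V} (hG : G.Connected) (hab : G.Adj a b)
    (ha : ¬(G.deleteEdges {s(a, b)}).Reachable a r)
    (hc : ¬(G.deleteEdges {s(c, d)}).Reachable c r)
    (hca : (G.deleteEdges {s(a, b)}).Reachable c a)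
    (hac : (G.deleteEdges {s(c, d)}).Reachable a c) :
    s(a, b) = s(c, d) := by
  by_contra hne
  have hbr : (G.deleteEdges {s(a, b)}).Reachable b r :=
    ((hG.reachable_deleteEdges_or a b r).resolve_left fun h => ha h.symm).symm
  have hdr : (G.deleteEdges {s(c, d)}).Reachable d r :=
    ((hG.reachable_deleteEdges_or c d r).resolve_left fun h => hc h.symm).symm
  have hcb : (G.deleteEdges {s(c, d)}).Reachable c b :=
    hac.symm.trans (Adj.reachable (by simp [hab, hne]))
  have hle₁ : (G.deleteEdges {s(a, b)}).deleteEdges {s(c, d)} ≤ G.deleteEdges {s(a, b)} :=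
    deleteEdges_le _
  have hle₂ : (G.deleteEdges {s(a, b)}).deleteEdges {s(c, d)} ≤ G.deleteEdges {s(c, d)} :=
    deleteEdges_mono (deleteEdges_le _)
  -- `b` lies in the part cut off by `s(c, d)`, yet reaches `r` avoiding `s(a, b)`
  rcases hbr.deleteEdges_or c d with h | h | h
  · exact hc (hcb.trans (h.mono hle₂))
  · exact ha (hca.symm.trans ((h.mono hle₁).symm.trans hbr))
  · exact hc (hcb.trans ((h.mono hle₂).trans hdr))

end SimpleGraph

section MetricSpace

variable {X : Type*} [MetricSpace X]

lemma packingNumber_antitone : Antitone (packingNumber X) := fun _ _ hε =>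
  iSup₂_mono' fun S hS => ⟨S, fun x hx y hy hxy =>
    (mul_le_mul_of_nonneg_left hε two_pos.le).trans (hS x hx y hy hxy), le_rfl⟩

lemma card_le_packingNumber {ι : Type*} (s : Finset ι) (f : ι → X) {ε : ℝ} (hε : 0 < ε)
    (hf : ∀ i ∈ s, ∀ j ∈ s, i ≠ j → 2 * ε ≤ dist (f i) (f j)) :
    (#s : ℝ≥0∞) ≤ packingNumber X ε := by
  have hinj : Set.InjOn f s := fun i hi j hj hij => by
    by_contra hne
    have := hf i hi j hj hne
    rw [hij, dist_self] at this
    linarith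
  rw [← Finset.card_image_of_injOn hinj]
  refine le_iSup₂_of_le (s.image f) ?_ le_rfl
  simp only [Finset.mem_image, forall_exists_index, and_imp, forall_apply_eq_imp_iff₂]
  exact fun i hi j hj hne => hf i hi j hj (ne_of_apply_ne f hne)

section MinimalSpanningTree

open SimpleGraph hiding dist

noncomputable def edgeLength {V : Type*} (v : V → X) : Sym2 V → ℝ :=
  Sym2.lift ⟨fun i j => dist (v i) (v j), fun _ _ => dist_comm _ _⟩

@[simp] lemma edgeLength_mk {V : Type*} (v : V → X) (i j : V) :
    edgeLength v s(i, j) = dist (v i) (v j) := rfl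

lemma edgeLength_nonneg {V : Type*} (v : V → X) (e : Sym2 V) : 0 ≤ edgeLength v e := by
  induction e with
  | _ i j => exact dist_nonneg

lemma energy_eq_sum {n : ℕ} (v : Fin n → X) (T : SimpleGraph (Fin n)) [Fintype T.edgeSet]
    (α : ℝ) :
    energy v T α = ∑ e ∈ T.edgeFinset, edgeLength v e ^ α := by
  rw [energy, Set.toFinite_toFinset]
  refine Finset.sum_congr rfl fun e _ => ?_
  induction e with
  | _ i j => rfl

lemma exists_isMST {n : ℕ} [NeZero n] (v : Fin n → X) : ∃ T, IsMST v T := by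
  obtain ⟨T₀, -, hT₀⟩ := (connected_top (V := Fin n)).exists_isTree_le
  exact Set.exists_min_image {T : SimpleGraph (Fin n) | T.IsTree} (energy v · 1)
    (Set.toFinite _) ⟨T₀, hT₀⟩

lemma mul_rpow_le_energy_of_isTree {n : ℕ} {v : Fin n → X} {T : SimpleGraph (Fin n)}
    (hT : T.IsTree) {c α : ℝ} (hc : 0 ≤ c) (hα : 0 ≤ α)
    (hv : ∀ i j, i ≠ j → c ≤ dist (v i) (v j)) :
    ((n : ℝ) - 1) * c ^ α ≤ energy v T α := by
  have hcard : (#T.edgeFinset : ℝ) = n - 1 := by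
    rw [eq_sub_iff_add_eq, ← Nat.cast_add_one, hT.card_edgeFinset, Fintype.card_fin]
  rw [energy_eq_sum, ← hcard, ← nsmul_eq_mul]
  refine Finset.card_nsmul_le_sum _ _ _ fun e he => ?_
  induction e with
  | _ i j => exact Real.rpow_le_rpow hc (hv i j (mem_edgeFinset.1 he).ne) hα

lemma IsMST.dist_le_of_reachable {n : ℕ} {v : Fin n → X} {T : SimpleGraph (Fin n)}
    (hT : IsMST v T) {a b x y : Fin n} (hab : T.Adj a b)
    (hx : (T.deleteEdges {s(a, b)}).Reachable x a)
    (hy : (T.deleteEdges {s(a, b)}).Reachable y b) :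
    dist (v a) (v b) ≤ dist (v x) (v y) := by
  have hxy : ¬(T.deleteEdges {s(a, b)}).Reachable x y := fun h =>
    hT.1.isAcyclic.not_reachable_deleteEdges hab (hx.symm.trans (h.trans hy))
  have hnew : s(x, y) ∉ T.edgeFinset.erase s(a, b) := fun h => hxy <| Adj.reachable <| by
    simpa [and_comm, eq_comm] using h
  have hedges : (T.deleteEdges {s(a, b)} ⊔ edge x y).edgeFinset =
      insert s(x, y) (T.edgeFinset.erase s(a, b)) := by
    ext e
    simp only [mem_edgeFinset, edgeSet_sup, edgeSet_deleteEdges, edgeSet_edge_of_ne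
      (fun h : x = y => hxy (h ▸ .rfl)), Finset.mem_insert, Finset.mem_erase, Set.mem_union,
      Set.mem_sdiff, Set.mem_singleton_iff]
    tauto
  have h := hT.2 _ (hT.1.isTree_deleteEdges_sup_edge hab hx hy)
  rw [energy_eq_sum, energy_eq_sum, hedges, Finset.sum_insert hnew,
    Finset.sum_erase_eq_sub (mem_edgeFinset.2 hab)] at h
  simp only [edgeLength_mk, Real.rpow_one] at h
  linarith

lemma IsMST.min_le_dist {n : ℕ} {v : Fin n → X} {T : SimpleGraph (Fin n)} (hT : IsMST v T)
    {r a b c d : Fin n} (hab : T.Adj a b) (hcd : T.Adj c d) (hne : s(a, b) ≠ s(c, d))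
    (ha : ¬(T.deleteEdges {s(a, b)}).Reachable a r)
    (hc : ¬(T.deleteEdges {s(c, d)}).Reachable c r) :
    min (dist (v a) (v b)) (dist (v c) (v d)) ≤ dist (v a) (v c) := by
  have hconn := hT.1.connected
  by_cases hcb : (T.deleteEdges {s(a, b)}).Reachable c b
  · exact (min_le_left _ _).trans (hT.dist_le_of_reachable hab .rfl hcb)
  by_cases had : (T.deleteEdges {s(c, d)}).Reachable a d
  · exact (min_le_right _ _).trans
      ((hT.dist_le_of_reachable hcd .rfl had).trans_eq (dist_comm _ _))
  exact absurd (hconn.eq_of_reachable_deleteEdges hab ha hc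
    ((hconn.reachable_deleteEdges_or a b c).resolve_right hcb)
    ((hconn.reachable_deleteEdges_or c d a).resolve_right had)) hne

lemma IsMST.card_filter_le_packingNumber {n : ℕ} {v : Fin n → X} {T : SimpleGraph (Fin n)}
    (hT : IsMST v T) {t : ℝ} (ht : 0 < t) :
    (#{e ∈ T.edgeFinset | t ≤ edgeLength v e} : ℝ≥0∞) ≤ packingNumber X (t / 2) := by
  obtain ⟨r⟩ := hT.1.connected.nonempty
  have : Nonempty (Fin n) := ⟨r⟩
  -- the tip `a e` of an edge `e` is its endpoint cut off from the root `r`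
  choose! a b hab using fun e (he : e ∈ T.edgeSet) =>
    hT.1.exists_eq_mk_not_reachable_deleteEdges r he
  refine card_le_packingNumber _ (fun e => v (a e)) (half_pos ht) fun e he f hf hef => ?_
  simp only [Finset.mem_filter, mem_edgeFinset] at he hf
  obtain ⟨hea, hadj, hcut⟩ := hab e he.1
  obtain ⟨hfa, hadj', hcut'⟩ := hab f hf.1
  rw [mul_div_cancel₀ _ two_ne_zero]
  calc t ≤ min (edgeLength v e) (edgeLength v f) := le_min he.2 hf.2
    _ = min (dist (v (a e)) (v (b e))) (dist (v (a f)) (v (b f))) := by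
      rw [← edgeLength_mk, ← edgeLength_mk, ← hea, ← hfa]
    _ ≤ dist (v (a e)) (v (a f)) := hT.min_le_dist hadj hadj' (hea ▸ hfa ▸ hef) hcut hcut'

lemma packingNumber_le_of_energy_le {α C ε : ℝ} (hα : 0 ≤ α) (hε : 0 < ε)
    (hC : ∀ n (v : Fin n → X) T, IsMST v T → energy v T α ≤ C) :
    packingNumber X ε ≤ ENNReal.ofReal (1 + C * (2 * ε) ^ (-α)) := by
  refine iSup₂_le fun S hS => ?_
  rcases S.eq_empty_or_nonempty with rfl | hS₀
  · simp
  have : NeZero #S := ⟨hS₀.card_pos.ne'⟩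
  let v : Fin #S → X := fun i => S.equivFin.symm i
  obtain ⟨T, hT⟩ := exists_isMST v
  have hsep : ∀ i j, i ≠ j → 2 * ε ≤ dist (v i) (v j) := fun i j hij =>
    hS _ (S.equivFin.symm i).2 _ (S.equivFin.symm j).2
      (Subtype.coe_injective.ne (S.equivFin.symm.injective.ne hij))
  have h := (mul_rpow_le_energy_of_isTree hT.1 (by positivity) hα hsep).trans (hC _ v T hT)
  rw [← ENNReal.ofReal_natCast]
  refine ENNReal.ofReal_le_ofReal ?_
  rw [Real.rpow_neg (by positivity), ← div_eq_mul_inv, ← sub_le_iff_le_add',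
    le_div_iff₀ (by positivity)]
  linarith

end MinimalSpanningTree

lemma rpow_le_two_rpow_mul_sum_dyadic {y D α : ℝ} {m : ℕ} (hD : 0 ≤ D) (hα : 0 ≤ α)
    (hyD : y ≤ D) (hmy : D / 2 ^ m ≤ y) :
    y ^ α ≤ 2 ^ α * ∑ j ∈ range (m + 1), if D / 2 ^ j ≤ y then (D / 2 ^ j) ^ α else 0 := by
  have hex : ∃ k, D / 2 ^ k ≤ y := ⟨m, hmy⟩
  set k := Nat.find hex
  have hk : D / 2 ^ k ≤ y := Nat.find_spec hex
  have hy : y ≤ 2 * (D / 2 ^ k) := by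
    rcases Nat.eq_zero_or_pos k with hk0 | hk0
    · rw [hk0, pow_zero, div_one]
      linarith
    · have hprev := Nat.find_min hex (Nat.sub_one_lt_of_lt hk0)
      rw [not_le] at hprev
      have h2 : D / 2 ^ (k - 1) = 2 * (D / 2 ^ k) := by
        rw [← Nat.sub_add_cancel hk0, pow_succ, Nat.add_sub_cancel]
        field_simp
      linarith
  have hterm : 0 ≤ D / 2 ^ k := by positivity
  calc y ^ α ≤ (2 * (D / 2 ^ k)) ^ α := Real.rpow_le_rpow (hterm.trans hk) hy hα
    _ = 2 ^ α * (D / 2 ^ k) ^ α := Real.mul_rpow zero_le_two hterm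
    _ ≤ _ := by
      gcongr
      refine le_of_eq_of_le (if_pos hk).symm
        (single_le_sum (f := fun j => if D / 2 ^ j ≤ y then (D / 2 ^ j) ^ α else 0)
          (fun j _ => ?_) (mem_range.2 (Nat.lt_succ_of_le (Nat.find_min' hex hmy))))
      split_ifs <;> positivity

lemma exists_forall_div_two_pow_le {ι : Type*} (s : Finset ι) (x : ι → ℝ) (D : ℝ) :
    ∃ m : ℕ, ∀ i ∈ s, 0 < x i → D / 2 ^ m ≤ x i := by
  refine (((eventually_all_finset s).2 fun i _ => ?_) : ∀ᶠ m : ℕ in atTop, _).exists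
  by_cases hxi : 0 < x i
  · have hlim : Tendsto (fun m : ℕ => D / 2 ^ m) atTop (𝓝 0) :=
      tendsto_const_nhds.div_atTop (tendsto_pow_atTop_atTop_of_one_lt one_lt_two)
    exact (hlim.eventually (eventually_le_nhds hxi)).mono fun _ h _ => h
  · exact Eventually.of_forall fun _ h => absurd h hxi

lemma sum_rpow_le_of_card_le {ι : Type*} (s : Finset ι) (x : ι → ℝ) {D K α β : ℝ}
    (hD : 0 < D) (hα : 0 < α) (hβα : β < α) (hx : ∀ i ∈ s, 0 ≤ x i ∧ x i ≤ D)
    (hcard : ∀ t ∈ Set.Ioc 0 D, (#{i ∈ s | t ≤ x i} : ℝ) ≤ K * t ^ (-β)) :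
    ∑ i ∈ s, x i ^ α ≤ 2 ^ α * K * D ^ (α - β) / (1 - 2 ^ (β - α)) := by
  set q : ℝ := 2 ^ (β - α)
  have hq : q < 1 := Real.rpow_lt_one_of_one_lt_of_neg one_lt_two (by linarith)
  have hK : 0 ≤ K := nonneg_of_mul_nonneg_left ((Nat.cast_nonneg _).trans
    (hcard D ⟨hD, le_rfl⟩)) (Real.rpow_pos_of_pos hD _)
  obtain ⟨m, hm⟩ := exists_forall_div_two_pow_le s x D
  set r : ℕ → ℝ := fun j => D / 2 ^ j
  have hr : ∀ j, 0 < r j := fun j => by positivity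
  calc ∑ i ∈ s, x i ^ α
      ≤ ∑ i ∈ s, 2 ^ α * ∑ j ∈ range (m + 1), if r j ≤ x i then r j ^ α else 0 := by
        refine sum_le_sum fun i hi => ?_
        rcases (hx i hi).1.eq_or_lt with h0 | hpos
        · rw [← h0, Real.zero_rpow hα.ne']
          refine mul_nonneg (by positivity) (sum_nonneg fun j _ => ?_)
          split_ifs <;> positivity
        · exact rpow_le_two_rpow_mul_sum_dyadic hD.le hα.le (hx i hi).2 (hm i hi hpos)
    _ = 2 ^ α * ∑ j ∈ range (m + 1), r j ^ α * #{i ∈ s | r j ≤ x i} := by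
        rw [← mul_sum, sum_comm]
        congr 1
        refine sum_congr rfl fun j _ => ?_
        rw [sum_ite, sum_const_zero, add_zero, sum_const, nsmul_eq_mul, mul_comm]
    _ ≤ 2 ^ α * ∑ j ∈ range (m + 1), K * D ^ (α - β) * q ^ j := by
        refine mul_le_mul_of_nonneg_left (sum_le_sum fun j _ => ?_) (by positivity)
        calc r j ^ α * #{i ∈ s | r j ≤ x i} ≤ r j ^ α * (K * r j ^ (-β)) := by
              gcongr
              exact hcard _ ⟨hr j, div_le_self hD.le (one_le_pow₀ one_le_two)⟩
          _ = K * D ^ (α - β) * q ^ j := by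
              rw [mul_left_comm, ← Real.rpow_add (hr j), ← sub_eq_add_neg,
                Real.div_rpow hD.le (by positivity), ← Real.rpow_natCast,
                ← Real.rpow_mul zero_le_two, ← Real.rpow_natCast, ← Real.rpow_mul zero_le_two,
                div_eq_mul_inv, ← Real.rpow_neg zero_le_two]
              ring_nf
    _ ≤ 2 ^ α * (K * D ^ (α - β) * (1 - q)⁻¹) := by
        rw [← mul_sum]
        refine mul_le_mul_of_nonneg_left (mul_le_mul_of_nonneg_left ?_ (by positivity))
          (by positivity)
        have := geom_sum_Ico_le_of_lt_one (m := 0) (n := m + 1) (Real.rpow_nonneg zero_le_two _) hq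
        rwa [← range_eq_Ico, pow_zero, one_div] at this
    _ = 2 ^ α * K * D ^ (α - β) / (1 - q) := by ring

lemma IsMST.energy_le {n : ℕ} {v : Fin n → X} {T : SimpleGraph (Fin n)} (hT : IsMST v T)
    {D K α β : ℝ} (hD : 0 < D) (hK₀ : 0 ≤ K) (hα : 0 < α) (hβα : β < α)
    (hv : ∀ i j, dist (v i) (v j) ≤ D)
    (hK : ∀ ε ∈ Set.Ioc 0 D, packingNumber X ε ≤ ENNReal.ofReal (K * ε ^ (-β))) :
    energy v T α ≤ 2 ^ α * (2 ^ β * K) * D ^ (α - β) / (1 - 2 ^ (β - α)) := by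
  rw [energy_eq_sum]
  refine sum_rpow_le_of_card_le _ _ hD hα hβα (fun e _ => ⟨edgeLength_nonneg v e, ?_⟩)
    fun t ⟨ht, htD⟩ => ?_
  · induction e with
    | _ i j => exact hv i j
  have hcount := (hT.card_filter_le_packingNumber ht).trans
    (hK (t / 2) ⟨half_pos ht, by linarith⟩)
  rw [← ENNReal.ofReal_natCast, ENNReal.ofReal_le_ofReal_iff (by positivity),
    Real.div_rpow ht.le zero_le_two, Real.rpow_neg zero_le_two, div_eq_mul_inv, inv_inv] at hcount
  linarith

lemma log_div_log_inv_le_iff {N K ε γ : ℝ} (hN : 0 < N) (hK : 0 < K) (hε₀ : 0 < ε)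
    (hε₁ : ε < 1) :
    Real.log N / Real.log (1 / ε) ≤ γ + Real.log K / Real.log (1 / ε) ↔
      N ≤ K * ε ^ (-γ) := by
  have hL : 0 < Real.log (1 / ε) := Real.log_pos (one_lt_one_div hε₀ hε₁)
  rw [← Real.log_le_log_iff hN (by positivity), Real.log_mul hK.ne' (by positivity),
    Real.log_rpow hε₀, div_le_iff₀ hL, add_mul, div_mul_cancel₀ _ hL.ne', one_div, Real.log_inv]
  constructor <;> intro h <;> linarith

lemma dimBox_le_of_eventually_packingNumber_le {K γ : ℝ}
    (h : ∀ᶠ ε in 𝓝[>] 0, packingNumber X ε ≤ ENNReal.ofReal (K * ε ^ (-γ))) :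
    dimBox X ≤ ENNReal.ofReal γ := by
  have hlim : Tendsto (fun ε : ℝ => ENNReal.ofReal (γ + Real.log K / Real.log (1 / ε)))
      (𝓝[>] 0) (𝓝 (ENNReal.ofReal γ)) := by
    have hlog : Tendsto (fun ε : ℝ => Real.log (1 / ε)) (𝓝[>] 0) atTop := by
      simpa only [one_div, Function.comp_def] using
        Real.tendsto_log_atTop.comp tendsto_inv_nhdsGT_zero
    simpa using ENNReal.tendsto_ofReal
      (tendsto_const_nhds.add (tendsto_const_nhds.div_atTop hlog))
  refine (limsup_le_limsup ?_).trans_eq hlim.limsup_eq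
  filter_upwards [h, Ioo_mem_nhdsGT one_pos] with ε hN ⟨hε₀, hε₁⟩
  rw [if_neg (ne_top_of_le_ne_top ENNReal.ofReal_ne_top hN)]
  rcases (ENNReal.toReal_nonneg (a := packingNumber X ε)).eq_or_lt with h0 | hpos
  · simp [← h0]
  have hb : 0 < K * ε ^ (-γ) :=
    ENNReal.ofReal_pos.1 ((ENNReal.toReal_pos_iff.1 hpos).1.trans_le hN)
  have hK : 0 < K := (mul_pos_iff_of_pos_right (Real.rpow_pos_of_pos hε₀ _)).1 hb
  exact ENNReal.ofReal_le_ofReal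
    ((log_div_log_inv_le_iff hpos hK hε₀ hε₁).2 (ENNReal.toReal_le_of_le_ofReal hb.le hN))

lemma eventually_packingNumber_le_of_dimBox_lt {β : ℝ} (h : dimBox X < ENNReal.ofReal β) :
    ∀ᶠ ε in 𝓝[>] 0, packingNumber X ε ≤ ENNReal.ofReal (ε ^ (-β)) := by
  filter_upwards [eventually_lt_of_limsup_lt h, Ioo_mem_nhdsGT one_pos] with ε hlt ⟨hε₀, hε₁⟩
  split_ifs at hlt with htop
  · exact absurd hlt not_top_lt
  rw [← ENNReal.ofReal_toReal htop]
  refine ENNReal.ofReal_le_ofReal ?_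
  rcases (ENNReal.toReal_nonneg (a := packingNumber X ε)).eq_or_lt with h0 | hpos
  · rw [← h0]
    positivity
  have := (log_div_log_inv_le_iff (γ := β) hpos one_pos hε₀ hε₁).1
  rw [Real.log_one, zero_div, add_zero, one_mul] at this
  exact this ((ENNReal.ofReal_lt_ofReal_iff'.1 hlt).1.le)

lemma exists_packingNumber_le_mul_rpow {β : ℝ} (hβ : 0 ≤ β)
    (h : ∀ᶠ ε in 𝓝[>] 0, packingNumber X ε ≤ ENNReal.ofReal (ε ^ (-β))) (D : ℝ) :
    ∃ K, 0 ≤ K ∧ ∀ ε ∈ Set.Ioc 0 D, packingNumber X ε ≤ ENNReal.ofReal (K * ε ^ (-β)) := by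
  obtain ⟨u, hu, hsub⟩ := mem_nhdsGT_iff_exists_Ioo_subset.1 h
  have hu₀ : (0 : ℝ) < u := hu
  refine ⟨max 1 ((u / 2) ^ (-β) * D ^ β), zero_le_one.trans (le_max_left _ _),
    fun ε ⟨hε₀, hεD⟩ => ?_⟩
  have hεβ : 0 < ε ^ (-β) := Real.rpow_pos_of_pos hε₀ _
  rcases lt_or_ge ε u with hεu | huε
  · exact (hsub ⟨hε₀, hεu⟩).trans
      (ENNReal.ofReal_le_ofReal (le_mul_of_one_le_left hεβ.le (le_max_left _ _)))
  refine (packingNumber_antitone (by linarith : u / 2 ≤ ε)).trans <|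
    (hsub ⟨half_pos hu₀, by linarith⟩).trans (ENNReal.ofReal_le_ofReal ?_)
  have hDε : 1 ≤ D ^ β * ε ^ (-β) := by
    rw [Real.rpow_neg hε₀.le, ← div_eq_mul_inv, one_le_div (Real.rpow_pos_of_pos hε₀ _)]
    exact Real.rpow_le_rpow hε₀.le hεD hβ
  calc (u / 2) ^ (-β) ≤ (u / 2) ^ (-β) * (D ^ β * ε ^ (-β)) :=
        le_mul_of_one_le_right (by positivity) hDε
    _ = (u / 2) ^ (-β) * D ^ β * ε ^ (-β) := by ring
    _ ≤ max 1 ((u / 2) ^ (-β) * D ^ β) * ε ^ (-β) := by gcongr; exact le_max_right _ _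

lemma dimBox_le_of_energy_le {α C : ℝ} (hα : 0 ≤ α)
    (hC : ∀ n (v : Fin n → X) T, IsMST v T → energy v T α ≤ C) :
    dimBox X ≤ ENNReal.ofReal α := by
  refine dimBox_le_of_eventually_packingNumber_le (K := 1 + C * 2 ^ (-α)) ?_
  filter_upwards [Ioo_mem_nhdsGT one_pos] with ε ⟨hε₀, hε₁⟩
  refine (packingNumber_le_of_energy_le hα hε₀ hC).trans (ENNReal.ofReal_le_ofReal ?_)
  rw [Real.mul_rpow zero_le_two hε₀.le]
  nlinarith [Real.one_le_rpow_of_pos_of_le_one_of_nonpos hε₀ hε₁.le (neg_nonpos.2 hα)]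

theorem dimBox_le_dimMST : dimBox X ≤ dimMST X :=
  le_sInf fun _ ⟨_, hα, hx, _, hC⟩ => hx ▸ dimBox_le_of_energy_le hα.le hC

theorem dimMST_le_dimBox (hX : Bornology.IsBounded (Set.univ : Set X)) :
    dimMST X ≤ dimBox X := by
  refine le_of_forall_gt_imp_ge_of_dense fun c hc => ?_
  obtain ⟨β, -, hβ, hβc⟩ := ENNReal.lt_iff_exists_real_btwn.1 hc
  obtain ⟨α, -, hβα, hαc⟩ := ENNReal.lt_iff_exists_real_btwn.1 hβc
  have hβ₀ : 0 < β := ENNReal.ofReal_pos.1 (zero_le.trans_lt hβ)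
  have hβα' : β < α := (ENNReal.ofReal_lt_ofReal_iff'.1 hβα).1
  obtain ⟨D₀, hD₀⟩ := Metric.isBounded_iff.1 hX
  obtain ⟨K, hK₀, hK⟩ := exists_packingNumber_le_mul_rpow hβ₀.le
    (eventually_packingNumber_le_of_dimBox_lt hβ) (max D₀ 1)
  refine le_trans (sInf_le ⟨α, hβ₀.trans hβα', rfl, _, fun n v T hT =>
    hT.energy_le (by positivity) hK₀ (hβ₀.trans hβα') hβα' (fun i j => ?_) hK⟩) hαc.le
  exact (hD₀ (Set.mem_univ _) (Set.mem_univ _)).trans (le_max_left _ _)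

end MetricSpace

/-- For a bounded metric space `M`, the MST dimension equals the upper box dimension. -/
theorem dimMST_eq_dimBox (M : Type*) [MetricSpace M]
    (hM : Bornology.IsBounded (Set.univ : Set M)) :
    dimMST M = dimBox M :=
  le_antisymm (dimMST_le_dimBox hM) dimBox_le_dimMST
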